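/- Fix 0 < r ≤ 1 and let k = ⌊1/r⌋ and c_r = ((k+1)r − 1)/k and d_r = 1/⌈1/c_r⌉. Then for all sufficiently large n, Q(n, ⌈rn⌉) ≥ d_r · ω(n,k). -/

import Mathlib

/-
Let `G` have `n` vertices and `χ(G) = ⌈rn⌉`. Deleting independent `(k+1)`-sets from `G` one at a
time, each deletion lowering `χ` by at most one, leaves an induced subgraph `H` with `α(H) ≤ k`
and `(k+1) χ(G) ≤ k |H| + n`, hence `|H| ≥ c n` and `ω(G) ≥ ω(H) ≥ ω(⌈cn⌉, k)`. Conversely the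
lexicographic product `K_m[F]` of a complete graph with an extremal graph `F` for `ω(n', k)` has
`α ≤ k` and `ω ≤ m ω(F)`, so `ω(n, k) ≤ m ω(n', k)` whenever `n ≤ m n'`; take `m = ⌈1/c⌉` and
`n' = ⌈cn⌉`.
-/

open SimpleGraph

/-- The independence number of a graph: clique number of the complement. -/
noncomputable def indepNum {V : Type*} (G : SimpleGraph V) : ℕ := Gᶜ.cliqueNum

/-- The chromatic number of a graph, as a natural number. -/
noncomputable def chi {V : Type*} (G : SimpleGraph V) : ℕ := G.chromaticNumber.toNat

/-- The inverse Ramsey number ω(n,k): minimum clique number over graphs on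
`n` vertices with independence number at most `k`. -/
noncomputable def invRamsey (n k : ℕ) : ℕ :=
  sInf {w | ∃ G : SimpleGraph (Fin n), _root_.indepNum G ≤ k ∧ G.cliqueNum = w}

/-- Q(n,c): minimum clique number over graphs on `n` vertices with chromatic number `c`. -/
noncomputable def Q (n c : ℕ) : ℕ :=
  sInf {w | ∃ G : SimpleGraph (Fin n), chi G = c ∧ G.cliqueNum = w}

open Finset

namespace SimpleGraph

variable {α β : Type*} {G : SimpleGraph α} {H : SimpleGraph β}

theorem cliqueNum_le_of_embedding [Finite β] (f : G ↪g H) : G.cliqueNum ≤ H.cliqueNum := by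
  obtain ⟨s, hs⟩ := G.exists_isNClique_cliqueNum
  have hclique : H.IsClique (s.map f.toEmbedding : Set β) := by
    rw [coe_map]
    rintro _ ⟨a, ha, rfl⟩ _ ⟨b, hb, rfl⟩ hab
    exact f.map_adj_iff.2 (hs.isClique ha hb (ne_of_apply_ne _ hab))
  rw [← hs.card_eq, ← s.card_map f.toEmbedding]
  exact hclique.card_le_cliqueNum

theorem indepNum_le_of_embedding [Finite β] (f : G ↪g H) : G.indepNum ≤ H.indepNum := by
  simpa using cliqueNum_le_of_embedding (Embedding.complEquiv f)

theorem cliqueNum_le_card [Fintype α] (G : SimpleGraph α) : G.cliqueNum ≤ Fintype.card α := by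
  obtain ⟨s, hs⟩ := G.exists_isNClique_cliqueNum
  exact hs.card_eq ▸ s.card_le_univ

theorem indepNum_top_le_one : (⊤ : SimpleGraph α).indepNum ≤ 1 := by
  obtain ⟨s, hs⟩ := (⊤ : SimpleGraph α).exists_isNIndepSet_indepNum
  rw [← hs.card_eq, card_le_one]
  intro a ha b hb
  by_contra hab
  exact hs.isIndepSet ha hb hab ((top_adj _ _).2 hab)

def lex (G : SimpleGraph α) (H : SimpleGraph β) : SimpleGraph (α × β) where
  Adj x y := G.Adj x.1 y.1 ∨ x.1 = y.1 ∧ H.Adj x.2 y.2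
  symm := ⟨fun _ _ h => h.imp G.adj_symm fun h => ⟨h.1.symm, h.2.symm⟩⟩
  loopless := ⟨fun _ h => h.elim G.irrefl fun h => H.irrefl h.2⟩

@[simp]
theorem lex_adj {x y : α × β} :
    (G.lex H).Adj x y ↔ G.Adj x.1 y.1 ∨ x.1 = y.1 ∧ H.Adj x.2 y.2 :=
  Iff.rfl

theorem compl_lex : (G.lex H)ᶜ = Gᶜ.lex Hᶜ := by
  ext x y
  obtain ⟨a, b⟩ := x
  obtain ⟨a', b'⟩ := y
  by_cases ha : a = a'
  · subst ha
    simp [compl_adj]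
  · simp [compl_adj, ha]

theorem cliqueNum_lex_le [Finite α] [Finite β] :
    (G.lex H).cliqueNum ≤ G.cliqueNum * H.cliqueNum := by
  classical
  obtain ⟨s, hs⟩ := (G.lex H).exists_isNClique_cliqueNum
  have hfst : G.IsClique (s.image Prod.fst : Set α) := by
    rw [coe_image]
    rintro _ ⟨x, hx, rfl⟩ _ ⟨y, hy, rfl⟩ hxy
    exact (lex_adj.1 (hs.isClique hx hy (ne_of_apply_ne _ hxy))).resolve_right (fun h => hxy h.1)
  have hfiber : ∀ a, #{x ∈ s | x.1 = a} ≤ H.cliqueNum := by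
    intro a
    have hinj : Set.InjOn Prod.snd (s.filter (·.1 = a) : Set (α × β)) := by
      intro x hx y hy h
      simp only [coe_filter, Set.mem_ofPred_eq] at hx hy
      exact Prod.ext (hx.2.trans hy.2.symm) h
    have hsnd : H.IsClique ((s.filter (·.1 = a)).image Prod.snd : Set β) := by
      rw [coe_image]
      rintro _ ⟨x, hx, rfl⟩ _ ⟨y, hy, rfl⟩ hxy
      simp only [coe_filter, Set.mem_ofPred_eq] at hx hy
      have hadj := lex_adj.1 (hs.isClique hx.1 hy.1 (ne_of_apply_ne _ hxy))
      exact (hadj.resolve_left (by rw [hx.2, hy.2]; exact G.irrefl)).2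
    rw [← card_image_of_injOn hinj]
    exact hsnd.card_le_cliqueNum
  calc (G.lex H).cliqueNum = #s := hs.card_eq.symm
    _ = ∑ a ∈ s.image Prod.fst, #{x ∈ s | x.1 = a} := card_eq_sum_card_image _ _
    _ ≤ #(s.image Prod.fst) * H.cliqueNum := sum_le_card_nsmul _ _ _ fun a _ => hfiber a
    _ ≤ G.cliqueNum * H.cliqueNum := Nat.mul_le_mul_right _ hfst.card_le_cliqueNum

theorem indepNum_lex_le [Finite α] [Finite β] :
    (G.lex H).indepNum ≤ G.indepNum * H.indepNum := by
  simpa [← cliqueNum_compl, compl_lex] using cliqueNum_lex_le (G := Gᶜ) (H := Hᶜ)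

theorem Colorable.induce_of_isIndepSet {V : Type*} {G : SimpleGraph V} {S J : Set V} {n : ℕ}
    (hJ : G.IsIndepSet J) (h : (G.induce (S \ J)).Colorable n) :
    (G.induce S).Colorable (n + 1) := by
  classical
  obtain ⟨C⟩ := h
  refine ⟨Coloring.mk
    (fun v => if hv : (v : V) ∈ J then Fin.last n else (C ⟨v, v.2, hv⟩).castSucc) ?_⟩
  intro u v huv
  have huv' : G.Adj u v := huv
  split_ifs with hu hv hv
  · exact absurd huv' (hJ hu hv huv'.ne)
  · exact (Fin.castSucc_lt_last _).ne'
  · exact (Fin.castSucc_lt_last _).ne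
  · exact fun h => C.valid (v := ⟨u, u.2, hu⟩) (w := ⟨v, v.2, hv⟩) huv'
      (Fin.castSucc_injective _ h)

theorem exists_isNIndepSet_subset_of_lt_indepNum_induce {V : Type*} [Finite V]
    {G : SimpleGraph V} {S : Set V} {k : ℕ} (h : k < (G.induce S).indepNum) :
    ∃ J : Finset V, ↑J ⊆ S ∧ G.IsNIndepSet (k + 1) J := by
  obtain ⟨s, hs⟩ := (G.induce S).exists_isNIndepSet_indepNum
  obtain ⟨t, hts, htk⟩ := exists_subset_card_eq (hs.card_eq ▸ h)
  refine ⟨t.map (Function.Embedding.subtype _), by simp, ?_, by simpa using htk⟩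
  rw [coe_map]
  rintro _ ⟨u, hu, rfl⟩ _ ⟨v, hv, rfl⟩ huv
  exact hs.isIndepSet (hts hu) (hts hv) (ne_of_apply_ne _ huv)

/-- `T` is what remains after greedily deleting `p` independent `(k+1)`-sets, each of which
costs one colour. -/
theorem exists_indepNum_induce_le_of_colorable {V : Type*} [Fintype V] (G : SimpleGraph V) (k : ℕ)
    (S : Finset V) : ∃ T ⊆ S, ∃ p, #S = #T + (k + 1) * p ∧
      (G.induce (T : Set V)).indepNum ≤ k ∧ (G.induce (S : Set V)).Colorable (#T + p) := by
  classical
  induction S using Finset.strongInduction with | H S ih => ?_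
  by_cases hS : (G.induce (S : Set V)).indepNum ≤ k
  · exact ⟨S, subset_rfl, 0, by simp, hS,
      by simpa using (G.induce (S : Set V)).colorable_of_fintype⟩
  obtain ⟨J, hJS, hJ⟩ := exists_isNIndepSet_subset_of_lt_indepNum_induce (not_le.1 hS)
  rw [coe_subset] at hJS
  obtain ⟨T, hTS, p, hcard, hα, hcol⟩ :=
    ih (S \ J) (sdiff_ssubset hJS (card_pos.1 (by simp [hJ.card_eq])))
  refine ⟨T, hTS.trans sdiff_subset, p + 1, ?_, hα, ?_⟩
  · rw [card_sdiff_of_subset hJS, hJ.card_eq] at hcard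
    have := hJ.card_eq ▸ card_le_card hJS
    grind
  · rw [coe_sdiff] at hcol
    exact hcol.induce_of_isIndepSet hJ.isIndepSet

end SimpleGraph

theorem chi_le_of_colorable {V : Type*} {G : SimpleGraph V} {n : ℕ} (h : G.Colorable n) :
    chi G ≤ n :=
  ENat.toNat_le_of_le_natCast h.chromaticNumber_le

theorem chi_comap_top_of_surjective {V W : Type*} [Fintype W] {f : V → W}
    (hf : Function.Surjective f) : chi ((⊤ : SimpleGraph W).comap f) = Fintype.card W := by
  have hsection : (⊤ : SimpleGraph W) →g (⊤ : SimpleGraph W).comap f :=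
    ⟨Function.surjInv hf, fun {a b} hab => by simpa [Function.surjInv_eq hf] using hab⟩
  rw [chi, le_antisymm (chromaticNumber_mono_of_hom (Hom.comap f ⊤))
    (chromaticNumber_mono_of_hom hsection), chromaticNumber_top, ENat.toNat_natCast]

theorem SimpleGraph.exists_indepNum_induce_le_of_chi {V : Type*} [Fintype V]
    (G : SimpleGraph V) (k : ℕ) : ∃ T : Finset V,
      (G.induce (T : Set V)).indepNum ≤ k ∧ (k + 1) * chi G ≤ k * #T + Fintype.card V := by
  obtain ⟨T, -, p, hcard, hα, hcol⟩ := G.exists_indepNum_induce_le_of_colorable k univ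
  have hχ : chi G ≤ #T + p := by
    rw [coe_univ] at hcol
    exact chi_le_of_colorable (hcol.of_hom (induceUnivIso G).symm.toHom)
  refine ⟨T, hα, ?_⟩
  rw [card_univ] at hcard
  nlinarith

theorem invRamsey_le_cliqueNum {V : Type*} [Fintype V] {n k : ℕ} {G : SimpleGraph V}
    (hG : G.indepNum ≤ k) (hn : n ≤ Fintype.card V) : invRamsey n k ≤ G.cliqueNum := by
  obtain ⟨f⟩ := Function.Embedding.nonempty_of_card_le (α := Fin n) (by simpa using hn)
  have hα : (G.comap f).indepNum ≤ k := (indepNum_le_of_embedding (Embedding.comap f G)).trans hG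
  calc invRamsey n k ≤ (G.comap f).cliqueNum :=
        Nat.sInf_le ⟨_, cliqueNum_compl.trans_le hα, rfl⟩
    _ ≤ G.cliqueNum := cliqueNum_le_of_embedding (Embedding.comap f G)

theorem exists_indepNum_le_cliqueNum_eq_invRamsey {n k : ℕ} (hk : 1 ≤ k) :
    ∃ H : SimpleGraph (Fin n), H.indepNum ≤ k ∧ H.cliqueNum = invRamsey n k := by
  obtain ⟨H, hα, hω⟩ := Nat.sInf_mem (s := {w | ∃ G : SimpleGraph (Fin n),
    _root_.indepNum G ≤ k ∧ G.cliqueNum = w})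
    ⟨_, ⊤, cliqueNum_compl.trans_le (indepNum_top_le_one.trans hk), rfl⟩
  exact ⟨H, cliqueNum_compl.symm.trans_le hα, hω⟩

theorem invRamsey_le_mul {n n' m k : ℕ} (hk : 1 ≤ k) (h : n ≤ m * n') :
    invRamsey n k ≤ m * invRamsey n' k := by
  obtain ⟨H, hα, hω⟩ := exists_indepNum_le_cliqueNum_eq_invRamsey (n := n') hk
  have hα' : ((⊤ : SimpleGraph (Fin m)).lex H).indepNum ≤ k :=
    indepNum_lex_le.trans (by nlinarith [indepNum_top_le_one (α := Fin m)])
  calc invRamsey n k ≤ ((⊤ : SimpleGraph (Fin m)).lex H).cliqueNum :=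
        invRamsey_le_cliqueNum hα' (by simpa using h)
    _ ≤ (⊤ : SimpleGraph (Fin m)).cliqueNum * H.cliqueNum := cliqueNum_lex_le
    _ ≤ m * invRamsey n' k := by
        rw [hω]
        exact Nat.mul_le_mul_right _ (by simpa using cliqueNum_le_card (⊤ : SimpleGraph (Fin m)))

theorem exists_chi_eq_cliqueNum_eq_Q {n c : ℕ} (hc : 1 ≤ c) (hcn : c ≤ n) :
    ∃ G : SimpleGraph (Fin n), chi G = c ∧ G.cliqueNum = Q n c := by
  have : NeZero c := ⟨by omega⟩
  have hG : chi ((⊤ : SimpleGraph (Fin c)).comap (Function.invFun (Fin.castLE hcn))) = c := by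
    simpa using chi_comap_top_of_surjective (Function.invFun_surjective (Fin.castLE_injective hcn))
  exact Nat.sInf_mem (s := {w | ∃ G : SimpleGraph (Fin n), chi G = c ∧ G.cliqueNum = w})
    ⟨_, _, hG, rfl⟩

theorem stmt_12 (r : ℝ) (hr0 : 0 < r) (hr1 : r ≤ 1) (k : ℕ) (hk : k = ⌊1 / r⌋₊)
    (c : ℝ) (hc : c = ((k + 1) * r - 1) / k)
    (d : ℝ) (hd : d = 1 / (⌈1 / c⌉₊ : ℝ)) :
    ∃ N : ℕ, ∀ n ≥ N, d * (invRamsey n k : ℝ) ≤ (Q n ⌈r * n⌉₊ : ℝ) := by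
  have hk1 : 1 ≤ k := hk ▸ Nat.le_floor (by rw [Nat.cast_one, le_div_iff₀ hr0]; linarith)
  have hkr : 1 < ((k : ℝ) + 1) * r := by
    have := hk ▸ Nat.lt_floor_add_one (1 / r)
    rwa [div_lt_iff₀ hr0] at this
  have hck : c * k = (k + 1) * r - 1 := by
    rw [hc, div_mul_cancel₀ _ (by positivity)]
  have hc0 : 0 < c := by nlinarith
  refine ⟨1, fun n hn => ?_⟩
  obtain ⟨G, hGχ, hGω⟩ := exists_chi_eq_cliqueNum_eq_Q (n := n) (c := ⌈r * n⌉₊)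
    (Nat.one_le_iff_ne_zero.2 (by positivity)) (Nat.ceil_le.2 (by nlinarith))
  obtain ⟨T, hα, hT⟩ := G.exists_indepNum_induce_le_of_chi k
  have hcT : c * n ≤ #T := by
    have hT' : ((k : ℝ) + 1) * ⌈r * n⌉₊ ≤ k * #T + n := by
      rw [Fintype.card_fin, hGχ] at hT
      exact_mod_cast hT
    -- `c n k = (k+1) r n - n ≤ (k+1) ⌈r n⌉ - n ≤ k |T|`
    have := Nat.le_ceil (r * n)
    nlinarith
  have hQ : invRamsey ⌈c * n⌉₊ k ≤ Q n ⌈r * n⌉₊ :=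
    hGω ▸ (invRamsey_le_cliqueNum hα (by simpa using Nat.ceil_le.2 hcT)).trans
      (cliqueNum_induce_le _)
  have hm : n ≤ ⌈1 / c⌉₊ * ⌈c * n⌉₊ := by
    have : (n : ℝ) ≤ ⌈1 / c⌉₊ * ⌈c * n⌉₊ :=
      calc (n : ℝ) = 1 / c * (c * n) := by field_simp
        _ ≤ ⌈1 / c⌉₊ * ⌈c * n⌉₊ := by gcongr <;> exact Nat.le_ceil _
    exact_mod_cast this
  have hmain := (invRamsey_le_mul hk1 hm).trans (Nat.mul_le_mul_left _ hQ)
  rw [hd, one_div, inv_mul_le_iff₀ (by positivity)]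
  exact_mod_cast hmain
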